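/- Let G be a connected graph of order at least two. If the strong resolving graph G_SR is bipartite, then sdim_f(G) = sdim(G). -/

import Mathlib

open SimpleGraph

/-- `Sset G x y` is the set `S{x,y}` of vertices `z` such that `x` lies on some shortest
`y`–`z` path or `y` lies on some shortest `x`–`z` path in `G`. -/
def Sset {V : Type*} (G : SimpleGraph V) (x y : V) : Set V :=
  {z | (∃ p : G.Walk y z, p.length = G.dist y z ∧ x ∈ p.support) ∨
       (∃ p : G.Walk x z, p.length = G.dist x z ∧ y ∈ p.support)}

/-- A strong resolving function of `G`: `g : V → [0,1]` with `g(S{x,y}) ≥ 1` for all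
distinct vertices `x, y`. -/
def IsSRF {V : Type*} (G : SimpleGraph V) (g : V → ℝ) : Prop :=
  (∀ v, 0 ≤ g v ∧ g v ≤ 1) ∧ ∀ x y : V, x ≠ y → 1 ≤ ∑ᶠ z ∈ Sset G x y, g z

/-- The fractional strong metric dimension of `G`. -/
noncomputable def sdimf {V : Type*} (G : SimpleGraph V) : ℝ :=
  sInf {s : ℝ | ∃ g : V → ℝ, IsSRF G g ∧ s = ∑ᶠ v, g v}

/-- A strong resolving set of `G`: every pair of distinct vertices is strongly resolved
by some vertex of `S` (i.e. some vertex of `S` lies in `S{x,y}`). -/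
def IsSRSet {V : Type*} (G : SimpleGraph V) (S : Set V) : Prop :=
  ∀ x y : V, x ≠ y → ∃ z ∈ S, z ∈ Sset G x y

/-- The strong metric dimension of `G`: the minimum cardinality of a strong resolving set. -/
noncomputable def sdim {V : Type*} (G : SimpleGraph V) : ℕ :=
  sInf {n : ℕ | ∃ S : Set V, IsSRSet G S ∧ S.ncard = n}

/-- `u` is maximally distant from `v`: `d(u,v) ≥ d(w,v)` for every neighbor `w` of `u`. -/
def MaxDistFrom {V : Type*} (G : SimpleGraph V) (u v : V) : Prop :=
  ∀ w : V, G.Adj u w → G.dist w v ≤ G.dist u v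

/-- `u` and `v` are mutually maximally distant (MMD) in `G`. -/
def MMD {V : Type*} (G : SimpleGraph V) (u v : V) : Prop :=
  u ≠ v ∧ MaxDistFrom G u v ∧ MaxDistFrom G v u

/-- The strong resolving graph of `G` (on the ambient vertex set): `u ~ v` iff `u` MMD `v`. -/
def SRGraph {V : Type*} (G : SimpleGraph V) : SimpleGraph V where
  Adj := MMD G
  symm := ⟨fun _ _ h => ⟨h.1.symm, h.2.2, h.2.1⟩⟩
  loopless := ⟨fun _ h => h.1 rfl⟩

/-- `M(G)`: the set of vertices that are mutually maximally distant with some vertex. -/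
def Mset {V : Type*} (G : SimpleGraph V) : Set V := {x | ∃ y, MMD G x y}

/-- The matching number of `G`. -/
noncomputable def matchNum {V : Type*} (G : SimpleGraph V) : ℕ :=
  sSup {n : ℕ | ∃ M : G.Subgraph, M.IsMatching ∧ M.edgeSet.ncard = n}

/-- The corona product `G ⊙ H`. -/
def corona {V W : Type*} (G : SimpleGraph V) (H : SimpleGraph W) :
    SimpleGraph (V ⊕ V × W) where
  Adj x y :=
    match x, y with
    | Sum.inl u, Sum.inl u' => G.Adj u u'
    | Sum.inl u, Sum.inr iw => u = iw.1
    | Sum.inr iw, Sum.inl u => iw.1 = u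
    | Sum.inr iw, Sum.inr iw' => iw.1 = iw'.1 ∧ H.Adj iw.2 iw'.2
  symm := by
    refine ⟨?_⟩
    rintro (u | iw) (u' | iw') h
    · exact G.adj_symm h
    · exact h.symm
    · exact h.symm
    · exact ⟨h.1.symm, H.adj_symm h.2⟩
  loopless := by
    refine ⟨?_⟩
    rintro (u | iw) h
    · exact G.irrefl h
    · exact H.irrefl h.2

/-- `K₁ ⊙ H`: the graph obtained from `H` by adding one new vertex adjacent to every
vertex of `H`. -/
def cone {W : Type*} (H : SimpleGraph W) : SimpleGraph (Option W) where
  Adj x y :=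
    match x, y with
    | none, none => False
    | none, some _ => True
    | some _, none => True
    | some w, some w' => H.Adj w w'
  symm := by
    refine ⟨?_⟩
    rintro (_ | w) (_ | w') h
    · exact h
    · exact trivial
    · exact trivial
    · exact H.adj_symm h
  loopless := by
    refine ⟨?_⟩
    rintro (_ | w) h
    · exact h
    · exact H.irrefl h

/-- The lexicographic product `G[H]`. -/
def lexProd {V W : Type*} (G : SimpleGraph V) (H : SimpleGraph W) :
    SimpleGraph (V × W) where
  Adj x y := G.Adj x.1 y.1 ∨ (x.1 = y.1 ∧ H.Adj x.2 y.2)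
  symm := by
    refine ⟨?_⟩
    rintro x y (h | ⟨h1, h2⟩)
    · exact Or.inl (G.adj_symm h)
    · exact Or.inr ⟨h1.symm, H.adj_symm h2⟩
  loopless := by
    refine ⟨?_⟩
    rintro x (h | ⟨_, h2⟩)
    · exact G.irrefl h
    · exact H.irrefl h2

/-- `SL{x,y} = (N[x] ∪ N[y]) ∩ S{x,y}`. -/
def SLset {W : Type*} (H : SimpleGraph W) (x y : W) : Set W :=
  (insert x (H.neighborSet x) ∪ insert y (H.neighborSet y)) ∩ Sset H x y

/-- A strong locating function of `H`. -/
def IsSLF {W : Type*} (H : SimpleGraph W) (f : W → ℝ) : Prop :=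
  (∀ v, 0 ≤ f v ∧ f v ≤ 1) ∧ ∀ x y : W, x ≠ y → 1 ≤ ∑ᶠ z ∈ SLset H x y, f z

/-- `sl_f(H)`: the minimum weight of a strong locating function of `H`. -/
noncomputable def slf {W : Type*} (H : SimpleGraph W) : ℝ :=
  sInf {s : ℝ | ∃ f : W → ℝ, IsSLF H f ∧ s = ∑ᶠ v, f v}

/-- `u` has a true twin: some other vertex with the same closed neighborhood. -/
def HasTrueTwin {V : Type*} (G : SimpleGraph V) (u : V) : Prop :=
  ∃ v : V, v ≠ u ∧ insert v (G.neighborSet v) = insert u (G.neighborSet u)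

/-- `u` has a false twin: some other vertex with the same open neighborhood. -/
def HasFalseTwin {V : Type*} (G : SimpleGraph V) (u : V) : Prop :=
  ∃ v : V, v ≠ u ∧ G.neighborSet v = G.neighborSet u

/-- `m₁(G)`: number of vertices in type-1 (singleton) classes of the twin relation. -/
noncomputable def m1 {V : Type*} (G : SimpleGraph V) : ℕ :=
  {u : V | ¬ HasTrueTwin G u ∧ ¬ HasFalseTwin G u}.ncard

/-- `m₂(G)`: number of vertices in type-2 (clique) classes of the twin relation. -/
noncomputable def m2 {V : Type*} (G : SimpleGraph V) : ℕ :=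
  {u : V | HasTrueTwin G u}.ncard

/-- `m₃(G)`: number of vertices in type-3 (independent set) classes of the twin relation. -/
noncomputable def m3 {V : Type*} (G : SimpleGraph V) : ℕ :=
  {u : V | HasFalseTwin G u}.ncard

/-- The strong resolving graph of `G` (whose vertex set is `M(G)`) is Hamiltonian:
there is a cycle in `SRGraph G` passing through every vertex of `M(G)`. -/
def SRHamiltonian {V : Type*} (G : SimpleGraph V) : Prop :=
  ∃ (u : V) (p : (SRGraph G).Walk u u), p.IsCycle ∧ ∀ v ∈ Mset G, v ∈ p.support

/-!
In a connected graph `S{x,y} = {x,y}` whenever `x` and `y` are mutually maximally distant, and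
every `S{x,y}` contains such a pair (extend a geodesic between `x` and `y` beyond both ends until
the ends are maximally distant). Hence the strong resolving sets are the vertex covers of
`G_SR`, and a strong resolving function is a fractional vertex cover of `G_SR`. A fractional
cover `h` of a bipartite graph with sides `A`, `B` rounds to an integral one: the threshold sets
`{a ∈ A | t ≤ h a} ∪ {b ∈ B | 1 - t < h b}` are covers, and their average size over `t ∈ (0,1]`
is at most `∑ h`.
-/

open MeasureTheory Set Finset

namespace SimpleGraph

section VertexCover

variable {V : Type*} {H : SimpleGraph V}

def thresholdSet (c : V → Fin 2) (h : V → ℝ) (v : V) : Set ℝ :=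
  if c v = 0 then Iic (h v) else Ioi (1 - h v)

lemma measurableSet_thresholdSet (c : V → Fin 2) (h : V → ℝ) (v : V) :
    MeasurableSet (thresholdSet c h v) := by
  unfold thresholdSet
  split_ifs
  exacts [measurableSet_Iic, measurableSet_Ioi]

lemma Coloring.mem_thresholdSet_or (C : H.Coloring (Fin 2)) {h : V → ℝ} {x y : V}
    (hxy : H.Adj x y) (hcov : 1 ≤ h x + h y) (t : ℝ) :
    t ∈ thresholdSet C h x ∨ t ∈ thresholdSet C h y := by
  have hne : C x ≠ C y := C.valid hxy
  unfold thresholdSet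
  by_cases hx : C x = 0
  · have hy : C y ≠ 0 := hx ▸ hne.symm
    simp only [hx, hy, if_true, if_false, Set.mem_Iic, Set.mem_Ioi]
    rcases le_or_gt t (h x) with htx | htx
    exacts [Or.inl htx, Or.inr (by linarith)]
  · have hy : C y = 0 := by omega
    simp only [hx, hy, if_true, if_false, Set.mem_Iic, Set.mem_Ioi]
    rcases le_or_gt t (h y) with hty | hty
    exacts [Or.inr hty, Or.inl (by linarith)]

lemma setIntegral_indicator_thresholdSet_le (c : V → Fin 2) {h : V → ℝ} {v : V}
    (hv : 0 ≤ h v) : ∫ t in Ioc (0 : ℝ) 1, (thresholdSet c h v).indicator 1 t ≤ h v := by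
  rw [integral_indicator_one (measurableSet_thresholdSet c h v),
    measureReal_restrict_apply (measurableSet_thresholdSet c h v)]
  unfold thresholdSet
  split_ifs
  · calc volume.real (Iic (h v) ∩ Ioc 0 1) ≤ volume.real (Ioc 0 (h v)) :=
          measureReal_mono (fun t ht => ⟨ht.2.1, ht.1⟩) measure_Ioc_lt_top.ne
      _ = h v := by rw [Real.volume_real_Ioc_of_le hv, sub_zero]
  · calc volume.real (Ioi (1 - h v) ∩ Ioc 0 1) ≤ volume.real (Ioc (1 - h v) 1) :=
          measureReal_mono (fun t ht => ⟨ht.1, ht.2.2⟩) measure_Ioc_lt_top.ne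
      _ = h v := by rw [Real.volume_real_Ioc_of_le (by linarith)]; ring

theorem exists_cover_card_le_sum_of_colorable_two [Fintype V] (hH : H.Colorable 2)
    {h : V → ℝ} (h0 : ∀ v, 0 ≤ h v) (hcov : ∀ x y, H.Adj x y → 1 ≤ h x + h y) :
    ∃ S : Finset V, (∀ x y, H.Adj x y → x ∈ S ∨ y ∈ S) ∧ (#S : ℝ) ≤ ∑ v, h v := by
  classical
  obtain ⟨C⟩ := hH
  let cover (t : ℝ) : Finset V := {v | t ∈ thresholdSet C h v}
  have card_cover (t : ℝ) : (#(cover t) : ℝ) = ∑ v, (thresholdSet C h v).indicator 1 t := by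
    rw [Finset.card_filter]
    push_cast
    simp only [Set.indicator_apply, Pi.one_apply]
  have integrableOn_indicator (v : V) : IntegrableOn ((thresholdSet C h v).indicator 1) (Ioc (0 : ℝ) 1) :=
    (integrableOn_const (C := (1 : ℝ)) measure_Ioc_lt_top.ne).indicator
      (measurableSet_thresholdSet C h v)
  obtain ⟨t, -, ht⟩ := exists_le_setAverage (μ := volume) (s := Ioc (0 : ℝ) 1)
    (f := fun t => ∑ v, (thresholdSet C h v).indicator 1 t) (by simp) (by simp)
    (integrable_finsetSum _ fun v _ => integrableOn_indicator v)
  refine ⟨cover t, fun x y hxy => ?_, ?_⟩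
  · simpa [cover] using C.mem_thresholdSet_or hxy (hcov x y hxy) t
  · rw [card_cover]
    refine ht.trans ?_
    rw [setAverage_eq, Real.volume_real_Ioc_of_le zero_le_one, sub_zero, inv_one, one_smul,
      integral_finsetSum _ fun v _ => integrableOn_indicator v]
    exact Finset.sum_le_sum fun v _ => setIntegral_indicator_thresholdSet_le C (h0 v)

end VertexCover

variable {V : Type*} {G : SimpleGraph V} {x y z : V}

lemma Connected.exists_walk_length_eq_dist_mem_support_iff (hG : G.Connected) :
    (∃ p : G.Walk y z, p.length = G.dist y z ∧ x ∈ p.support) ↔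
      G.dist y z = G.dist y x + G.dist x z := by
  constructor
  · rintro ⟨p, hp, hx⟩
    obtain ⟨q, r, rfl⟩ := Walk.mem_support_iff_exists_append.mp hx
    have := G.dist_le q
    have := G.dist_le r
    have : G.dist y z ≤ G.dist y x + G.dist x z := hG.dist_triangle
    rw [Walk.length_append] at hp
    omega
  · intro h
    obtain ⟨q, hq⟩ := hG.exists_walk_length_eq_dist y x
    obtain ⟨r, hr⟩ := hG.exists_walk_length_eq_dist x z
    exact ⟨q.append r, by rw [Walk.length_append, hq, hr, h], by simp⟩

lemma Connected.mem_Sset_iff (hG : G.Connected) :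
    z ∈ Sset G x y ↔
      G.dist y z = G.dist y x + G.dist x z ∨ G.dist x z = G.dist x y + G.dist y z :=
  or_congr hG.exists_walk_length_eq_dist_mem_support_iff
    hG.exists_walk_length_eq_dist_mem_support_iff

lemma Connected.right_mem_Sset (hG : G.Connected) : y ∈ Sset G x y :=
  hG.mem_Sset_iff.mpr (Or.inr (by simp))

lemma Connected.exists_adj_dist_add_one_le (hG : G.Connected) (hxz : x ≠ z) :
    ∃ w, G.Adj x w ∧ G.dist w z + 1 ≤ G.dist x z := by
  obtain ⟨p, hp⟩ := hG.exists_walk_length_eq_dist x z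
  cases p with
  | nil => exact absurd rfl hxz
  | cons hadj q => exact ⟨_, hadj, by simpa [← hp] using G.dist_le q⟩

end SimpleGraph

section StrongResolving

variable {V : Type*} {G : SimpleGraph V} {x y z : V}

lemma MaxDistFrom.dist_lt_dist_add_dist (hG : G.Connected) (hmd : MaxDistFrom G x y)
    (hzx : z ≠ x) : G.dist y z < G.dist y x + G.dist x z := by
  obtain ⟨w, hxw, hwz⟩ := hG.exists_adj_dist_add_one_le hzx.symm
  have : G.dist y z ≤ G.dist y w + G.dist w z := hG.dist_triangle
  have : G.dist w y ≤ G.dist x y := hmd w hxw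
  have : G.dist w y = G.dist y w := dist_comm
  have : G.dist x y = G.dist y x := dist_comm
  omega

lemma Sset_eq_pair_of_MMD (hG : G.Connected) (h : MMD G x y) : Sset G x y = {x, y} := by
  obtain ⟨-, hxy, hyx⟩ := h
  ext z
  rw [hG.mem_Sset_iff, Set.mem_insert_iff, Set.mem_singleton_iff]
  by_cases hzx : z = x
  · simp [hzx]
  by_cases hzy : z = y
  · simp [hzy]
  have := hxy.dist_lt_dist_add_dist hG hzx
  have := hyx.dist_lt_dist_add_dist hG hzy
  have : G.dist x y = G.dist y x := dist_comm
  simp only [hzx, hzy, or_false, iff_false]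
  omega

lemma exists_maxDistFrom_dist_eq_add [Fintype V] (hG : G.Connected) (u v : V) :
    ∃ u', MaxDistFrom G u' v ∧ G.dist v u' = G.dist v u + G.dist u u' := by
  classical
  let T : Finset V := {w | G.dist v w = G.dist v u + G.dist u w}
  obtain ⟨w, hwT, hmax⟩ := T.exists_max_image (G.dist v) ⟨u, by simp [T]⟩
  have hw : G.dist v w = G.dist v u + G.dist u w := (Finset.mem_filter.mp hwT).2
  refine ⟨w, fun w' hww' => ?_, hw⟩
  have hw'w : G.dist w w' ≤ 1 := by simpa using G.dist_le hww'.toWalk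
  have : G.dist v w' ≤ G.dist v w + G.dist w w' := hG.dist_triangle
  have : G.dist u w' ≤ G.dist u w + G.dist w w' := hG.dist_triangle
  have : G.dist v w' ≤ G.dist v u + G.dist u w' := hG.dist_triangle
  have : G.dist w' v = G.dist v w' := dist_comm
  have : G.dist w v = G.dist v w := dist_comm
  by_contra! hlt
  have := hmax w' (Finset.mem_filter.mpr ⟨Finset.mem_univ _, by omega⟩)
  omega

lemma exists_MMD_mem_Sset [Fintype V] (hG : G.Connected) (hxy : x ≠ y) :
    ∃ x' y', MMD G x' y' ∧ x' ∈ Sset G x y ∧ y' ∈ Sset G x y := by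
  obtain ⟨x', hx'y, hx'⟩ := exists_maxDistFrom_dist_eq_add hG x y
  obtain ⟨y', hy'x', hy'⟩ := exists_maxDistFrom_dist_eq_add hG y x'
  have hx'y' : MaxDistFrom G x' y' := fun w hx'w => by
    have : G.dist w y' ≤ G.dist w y + G.dist y y' := hG.dist_triangle
    have := hx'y w hx'w
    omega
  have hyx : 0 < G.dist y x := hG.pos_dist_of_ne hxy.symm
  have : G.dist x y' ≤ G.dist x y + G.dist y y' := hG.dist_triangle
  have : G.dist x' y' ≤ G.dist x' x + G.dist x y' := hG.dist_triangle
  have : G.dist x y = G.dist y x := dist_comm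
  have : G.dist x' x = G.dist x x' := dist_comm
  have : G.dist x' y = G.dist y x' := dist_comm
  refine ⟨x', y', ⟨?_, hx'y', hy'x'⟩, hG.mem_Sset_iff.mpr (Or.inl hx'),
    hG.mem_Sset_iff.mpr (Or.inr (by omega))⟩
  rintro rfl
  simp only [SimpleGraph.dist_self] at hy'
  omega

lemma isSRSet_univ (hG : G.Connected) : IsSRSet G univ :=
  fun _ _ _ => ⟨_, mem_univ _, hG.right_mem_Sset⟩

lemma isSRSet_of_forall_MMD [Fintype V] (hG : G.Connected) {S : Set V}
    (hS : ∀ x y, MMD G x y → x ∈ S ∨ y ∈ S) : IsSRSet G S := by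
  intro x y hxy
  obtain ⟨x', y', hx'y', hx', hy'⟩ := exists_MMD_mem_Sset hG hxy
  rcases hS x' y' hx'y' with h | h
  exacts [⟨x', h, hx'⟩, ⟨y', h, hy'⟩]

lemma IsSRF.one_le_add_of_MMD (hG : G.Connected) {g : V → ℝ} (hg : IsSRF G g)
    (hxy : MMD G x y) : 1 ≤ g x + g y := by
  simpa only [Sset_eq_pair_of_MMD hG hxy, finsum_mem_pair hxy.1] using hg.2 x y hxy.1

lemma IsSRSet.isSRF_indicator [Finite V] {S : Set V} (hS : IsSRSet G S) :
    IsSRF G (S.indicator 1) := by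
  refine ⟨fun v => ⟨indicator_nonneg (fun _ _ => zero_le_one) v,
    indicator_le_self' (fun _ _ => zero_le_one) v⟩, fun x y hxy => ?_⟩
  obtain ⟨z, hzS, hz⟩ := hS x y hxy
  rw [finsum_mem_def]
  calc (1 : ℝ) = (Sset G x y).indicator (S.indicator 1) z := by simp [hz, hzS]
    _ ≤ _ := single_le_finsum z (toFinite _) fun _ => indicator_nonneg
        (fun _ _ => indicator_nonneg (fun _ _ => zero_le_one) _) _

lemma finsum_indicator_one_eq_ncard {α : Type*} [Finite α] (s : Set α) :
    ∑ᶠ a, s.indicator (1 : α → ℝ) a = s.ncard := by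
  rw [← finsum_mem_def, ← finsum_one, Nat.cast_finsum_mem s.toFinite, Nat.cast_one]
  rfl

lemma sdim_le_ncard {S : Set V} (hS : IsSRSet G S) : sdim G ≤ S.ncard :=
  Nat.sInf_le ⟨S, hS, rfl⟩

lemma exists_isSRSet_ncard_eq_sdim (hG : G.Connected) :
    ∃ S, IsSRSet G S ∧ S.ncard = sdim G :=
  Nat.sInf_mem (s := {n | ∃ S, IsSRSet G S ∧ S.ncard = n}) ⟨_, univ, isSRSet_univ hG, rfl⟩

end StrongResolving

theorem sdimf_eq_sdim_of_bipartite_SRGraph_general {V : Type*} [Fintype V] (G : SimpleGraph V)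
    (hG : G.Connected) (hbip : (SRGraph G).Colorable 2) :
    sdimf G = (sdim G : ℝ) := by
  refine IsLeast.csInf_eq ⟨?_, ?_⟩
  · obtain ⟨S, hS, hcard⟩ := exists_isSRSet_ncard_eq_sdim hG
    exact ⟨S.indicator 1, hS.isSRF_indicator, by rw [finsum_indicator_one_eq_ncard, hcard]⟩
  · rintro _ ⟨g, hg, rfl⟩
    obtain ⟨S, hS, hSg⟩ := exists_cover_card_le_sum_of_colorable_two hbip
      (fun v => (hg.1 v).1) fun _ _ => hg.one_le_add_of_MMD hG
    calc (sdim G : ℝ) ≤ #S :=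
          mod_cast (sdim_le_ncard (isSRSet_of_forall_MMD hG hS)).trans_eq (ncard_coe_finset S)
      _ ≤ ∑ v, g v := hSg
      _ = ∑ᶠ v, g v := (finsum_eq_sum_of_fintype g).symm

/-- If `G` is connected of order at least two and `G_SR` is bipartite,
then `sdim_f(G) = sdim(G)`. -/
theorem sdimf_eq_sdim_of_bipartite_SRGraph {V : Type*} [Fintype V] (G : SimpleGraph V)
    (hG : G.Connected) (hcard : 2 ≤ Fintype.card V)
    (hbip : (SRGraph G).Colorable 2) :
    sdimf G = (sdim G : ℝ) :=
  sdimf_eq_sdim_of_bipartite_SRGraph_general G hG hbip
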